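/- Let C be a finite conjunction of K linear inequalities s^p α ≤ s^q β over size variables whose dependency graph has no increasing cycle. Then C has a linear solution, i.e., a substitution φ with (αφ)↓ ≠ ∞ for all α, satisfying all constraints. Concretely, there exist natural numbers (ω_α) for each variable α of C such that for every constraint s^p α ≤ s^q β in C, ω_α + p ≤ ω_β; then φ mapping α to s^{ω_α} γ for a fresh variable γ is a solution. -/

import Mathlib

/-- Size expressions of the size algebra A: a ::= α | s a | ∞. -/
inductive SExpr : Type
  | var : ℕ → SExpr
  | s : SExpr → SExpr
  | infty : SExpr
deriving DecidableEq

/-- The quasi-ordering ≤_A on size expressions. -/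
inductive SLe : SExpr → SExpr → Prop
  | refl (a) : SLe a a
  | trans {a b c} : SLe a b → SLe b c → SLe a c
  | mon {a b} : SLe a b → SLe (.s a) (.s b)
  | succ {a b} : SLe a b → SLe a (.s b)
  | infty (a) : SLe a .infty

/-- Normal form w.r.t. the rewrite rule s∞ → ∞. -/
def nf : SExpr → SExpr
  | .var α => .var α
  | .infty => .infty
  | .s a =>
    match nf a with
    | .infty => .infty
    | b => .s b

/-- Action of a size substitution on size expressions. -/
def subst (φ : ℕ → SExpr) : SExpr → SExpr
  | .var α => φ α
  | .s a => .s (subst φ a)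
  | .infty => .infty

/-- A linear inequality constraint s^p α ≤ s^q β between size variables. -/
structure LinIneq : Type where
  p : ℕ
  α : ℕ
  q : ℕ
  β : ℕ

/-- φ solves the linear inequality s^p α ≤ s^q β. -/
def SolvesLin (φ : ℕ → SExpr) (e : LinIneq) : Prop :=
  SLe (SExpr.s^[e.p] (φ e.α)) (SExpr.s^[e.q] (φ e.β))

/-- A cycle of a conjunction D of linear inequalities: a nonempty list of
constraints of D whose edges α →^{p−q} β chain up cyclically. -/
def IsCycle (D L : List LinIneq) : Prop :=
  L ≠ [] ∧ (∀ e ∈ L, e ∈ D) ∧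
  ∀ i : Fin L.length,
    (L.get i).β = (L.get ⟨(i + 1) % L.length, Nat.mod_lt _ i.pos⟩).α

/-- The cost of a list of edges: the sum of the labels p − q. -/
def cost (L : List LinIneq) : ℤ :=
  (L.map (fun e => (e.p : ℤ) - (e.q : ℤ))).sum

/-!
Longest-path potentials. Give the edge `α → β` of a constraint `s^p α ≤ s^q β` the weight
`p - q`, and let `ω b` be the largest weight of a walk ending at `b` (the empty walk gives
`ω b ≥ 0`). Without increasing cycles this is finite: a walk that repeats an edge contains a
cycle, and erasing it does not decrease the weight, so repetition-free walks, of length at most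
`|C|`, attain the supremum. Extending a walk to `α` by the edge `α → β` gives
`ω α + p - q ≤ ω β`, and then `α ↦ s^{ω α} γ` solves every constraint.
-/

lemma sle_iterate_s_of_le {m n : ℕ} (h : m ≤ n) (a : SExpr) :
    SLe (SExpr.s^[m] a) (SExpr.s^[n] a) := by
  induction n, h using Nat.le_induction with
  | base => exact .refl _
  | succ n _ ih => rw [Function.iterate_succ_apply']; exact .succ ih

lemma solvesLin_iterate_s_var {ω : ℕ → ℕ} {e : LinIneq} (h : ω e.α + e.p ≤ ω e.β + e.q)
    (γ : ℕ) : SolvesLin (fun α => SExpr.s^[ω α] (.var γ)) e := by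
  unfold SolvesLin
  simp only [← Function.iterate_add_apply]
  exact sle_iterate_s_of_le (by omega) _

lemma List.exists_eq_append_cons_append_cons_of_not_nodup {α : Type*} :
    ∀ {l : List α}, ¬ l.Nodup → ∃ A a B D, l = A ++ a :: (B ++ a :: D)
  | [], h => absurd List.nodup_nil h
  | a :: l, h => by
    rw [List.nodup_cons, not_and_or, not_not] at h
    rcases h with ha | hl
    · obtain ⟨B, D, rfl⟩ := List.append_of_mem ha
      exact ⟨[], a, B, D, rfl⟩
    · obtain ⟨A, b, B, D, rfl⟩ := exists_eq_append_cons_append_cons_of_not_nodup hl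
      exact ⟨a :: A, b, B, D, rfl⟩

def LinIneq.Adj (e f : LinIneq) : Prop := e.β = f.α

@[simp] lemma cost_nil : cost [] = 0 := rfl

@[simp] lemma cost_append (L₁ L₂ : List LinIneq) :
    cost (L₁ ++ L₂) = cost L₁ + cost L₂ := by
  simp [cost]

@[simp] lemma cost_cons (e : LinIneq) (L : List LinIneq) :
    cost (e :: L) = (e.p - e.q : ℤ) + cost L := by
  simp [cost]

lemma isCycle_cons_of_isChain {C B : List LinIneq} {e : LinIneq} (hC : ∀ f ∈ e :: B, f ∈ C)
    (hchain : (e :: B ++ [e]).IsChain LinIneq.Adj) : IsCycle C (e :: B) := by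
  refine ⟨List.cons_ne_nil _ _, hC, fun i => ?_⟩
  have hi := List.isChain_iff_getElem.mp hchain i (by simp; omega)
  simp only [List.get_eq_getElem]
  rcases Nat.lt_or_ge (i + 1) (e :: B).length with h | h
  · rw [List.getElem_append_left (by simpa using i.isLt), List.getElem_append_left h] at hi
    simp only [Nat.mod_eq_of_lt h]
    exact hi
  · have hlen : (i : ℕ) + 1 = (e :: B).length := le_antisymm (by omega) h
    rw [List.getElem_append_left (by simpa using i.isLt)] at hi
    simp_all [LinIneq.Adj]

/-- The empty walk counts as ending at every `b`. -/
def IsWalkTo (C : List LinIneq) (b : ℕ) (L : List LinIneq) : Prop :=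
  (∀ e ∈ L, e ∈ C) ∧ L.IsChain LinIneq.Adj ∧ ∀ e ∈ L.getLast?, e.β = b

lemma isWalkTo_nil (C : List LinIneq) (b : ℕ) : IsWalkTo C b [] := by
  simp [IsWalkTo]

lemma IsWalkTo.concat {C L : List LinIneq} {e : LinIneq} (hL : IsWalkTo C e.α L) (he : e ∈ C) :
    IsWalkTo C e.β (L ++ [e]) := by
  obtain ⟨hLC, hchain, hend⟩ := hL
  refine ⟨by simpa [or_imp, forall_and] using ⟨hLC, he⟩, ?_, by simp⟩
  exact hchain.append (.singleton e) fun x hx y hy => by simp_all [LinIneq.Adj]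

lemma IsWalkTo.erase_cycle {C A B D : List LinIneq} {b : ℕ} {e : LinIneq}
    (hL : IsWalkTo C b (A ++ e :: (B ++ e :: D))) :
    IsWalkTo C b (A ++ e :: D) ∧ IsCycle C (e :: B) := by
  obtain ⟨hLC, hchain, hend⟩ := hL
  rw [List.isChain_split, ← List.cons_append, List.isChain_split (l₁ := e :: B)] at hchain
  obtain ⟨hA, hB, hD⟩ := hchain
  refine ⟨⟨fun f hf => hLC f ?_, List.isChain_split.mpr ⟨hA, hD⟩, ?_⟩,
    isCycle_cons_of_isChain (fun f hf => hLC f ?_) hB⟩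
  · simp only [List.mem_append, List.mem_cons] at hf ⊢; tauto
  · have hlast : (e :: (B ++ e :: D)).getLast? = (e :: D).getLast? := by
      rw [← List.cons_append, List.getLast?_append_of_ne_nil _ (List.cons_ne_nil _ _)]
    simpa [List.getLast?_append, hlast] using hend
  · simp only [List.mem_append, List.mem_cons] at hf ⊢; tauto

lemma cost_le_of_nodup {C L : List LinIneq} (hLC : ∀ e ∈ L, e ∈ C) (hL : L.Nodup) :
    cost L ≤ C.length * (C.map LinIneq.p).sum := by
  have hedge : ∀ e ∈ L, (e.p - e.q : ℤ) ≤ (C.map LinIneq.p).sum := fun e he => by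
    have := List.le_sum_of_mem (List.mem_map_of_mem (f := LinIneq.p) (hLC e he))
    omega
  calc cost L ≤ (L.map fun _ => ((C.map LinIneq.p).sum : ℤ)).sum := List.sum_le_sum hedge
    _ = L.length * (C.map LinIneq.p).sum := by simp
    _ ≤ C.length * (C.map LinIneq.p).sum := by gcongr; exact (hL.subperm hLC).length_le

lemma cost_le_of_isWalkTo {C : List LinIneq} (hnocyc : ¬ ∃ L, IsCycle C L ∧ 0 < cost L)
    {b : ℕ} {L : List LinIneq} (hL : IsWalkTo C b L) :
    cost L ≤ C.length * (C.map LinIneq.p).sum := by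
  by_cases hnd : L.Nodup
  · exact cost_le_of_nodup hL.1 hnd
  obtain ⟨A, e, B, D, rfl⟩ := List.exists_eq_append_cons_append_cons_of_not_nodup hnd
  obtain ⟨hshorter, hcyc⟩ := hL.erase_cycle
  have hcyc_cost : cost (e :: B) ≤ 0 := not_lt.mp fun h => hnocyc ⟨_, hcyc, h⟩
  calc cost (A ++ e :: (B ++ e :: D)) = cost (A ++ e :: D) + cost (e :: B) := by simp; ring
    _ ≤ cost (A ++ e :: D) := by linarith
    _ ≤ _ := cost_le_of_isWalkTo hnocyc hshorter
termination_by L.length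
decreasing_by subst_vars; simp

noncomputable def potential (C : List LinIneq) (b : ℕ) : ℤ :=
  sSup (cost '' {L | IsWalkTo C b L})

lemma cost_le_potential {C : List LinIneq} (hnocyc : ¬ ∃ L, IsCycle C L ∧ 0 < cost L)
    {b : ℕ} {L : List LinIneq} (hL : IsWalkTo C b L) : cost L ≤ potential C b :=
  le_csSup ⟨_, Set.forall_mem_image.2 fun _ => cost_le_of_isWalkTo hnocyc⟩ ⟨L, hL, rfl⟩

lemma potential_nonneg {C : List LinIneq} (hnocyc : ¬ ∃ L, IsCycle C L ∧ 0 < cost L)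
    (b : ℕ) : 0 ≤ potential C b :=
  cost_le_potential hnocyc (isWalkTo_nil C b)

lemma potential_add_le {C : List LinIneq} (hnocyc : ¬ ∃ L, IsCycle C L ∧ 0 < cost L)
    {e : LinIneq} (he : e ∈ C) :
    potential C e.α + (e.p - e.q) ≤ potential C e.β := by
  suffices potential C e.α ≤ potential C e.β - (e.p - e.q) by linarith
  refine csSup_le ⟨_, _, isWalkTo_nil C e.α, rfl⟩ ?_
  rintro _ ⟨L, hL, rfl⟩
  have := cost_le_potential hnocyc (hL.concat he)
  simp only [cost_append, cost_cons, cost_nil] at this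
  linarith

/-- A conjunction of linear inequalities with no increasing cycle has a linear
solution: there are natural numbers ω_α with ω_α + p ≤ ω_β + q for every
constraint s^p α ≤ s^q β, and mapping α to s^{ω_α} γ (γ any variable) solves
all constraints. -/
theorem linear_solution_exists (C : List LinIneq)
    (hnocyc : ¬ ∃ L, IsCycle C L ∧ 0 < cost L) :
    ∃ ω : ℕ → ℕ,
      (∀ e ∈ C, ω e.α + e.p ≤ ω e.β + e.q) ∧
      ∀ γ : ℕ, ∀ e ∈ C,
        SolvesLin (fun α => SExpr.s^[ω α] (.var γ)) e := by
  have hω : ∀ e ∈ C, (potential C e.α).toNat + e.p ≤ (potential C e.β).toNat + e.q :=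
    fun e he => by
      have := potential_add_le hnocyc he
      have := potential_nonneg hnocyc e.α
      have := potential_nonneg hnocyc e.β
      omega
  exact ⟨fun b => (potential C b).toNat, hω,
    fun γ e he => solvesLin_iterate_s_var (hω e he) γ⟩
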